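/- Let A be a finite von Neumann factor with normalized trace tr, and let 1 < p, q < ∞ with 1/p + 1/q = 1. If c, d ∈ A are positive with c^q + d^q ≤ 1, then tr(ca + db) ≤ (tr(a^p + b^p))^{1/p} for all positive a, b ∈ A. -/

import Mathlib

open scoped ComplexOrder
open Set Filter Topology

/-! For positive `x, y` and a positive tracial functional `φ`, the function
`θ ↦ Re φ (x ^ ((1 - θ) q) * y ^ (θ p))` is bounded on `[0, 1]` and midpoint log-convex: by
traciality the midpoint inequality is the Cauchy–Schwarz inequality for `(u, v) ↦ φ (u⋆ v)`.
A bounded midpoint log-convex function is log-convex, which at `θ = 1/p` is the tracial Hölder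
inequality `Re φ (x y) ≤ (Re φ (x^q))^(1/q) (Re φ (y^p))^(1/p)`. Adding it for `(c, a)` and `(d, b)`
and applying the two-term Hölder inequality, with `tr (c^q) + tr (d^q) ≤ 1`, gives the claim. -/

theorem le_one_of_sq_midpoint_le {g : ℝ → ℝ} {M : ℝ} (hg : ∀ t ∈ Icc (0 : ℝ) 1, 0 ≤ g t)
    (hM : ∀ t ∈ Icc (0 : ℝ) 1, g t ≤ M)
    (hmid : ∀ s ∈ Icc (0 : ℝ) 1, ∀ t ∈ Icc (0 : ℝ) 1, g ((s + t) / 2) ^ 2 ≤ g s * g t)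
    (h0 : g 0 ≤ 1) (h1 : g 1 ≤ 1) {t : ℝ} (ht : t ∈ Icc (0 : ℝ) 1) : g t ≤ 1 := by
  have hpow : ∀ n : ℕ, ∀ t ∈ Icc (0 : ℝ) 1, g t ^ 2 ^ n ≤ M := by
    intro n
    induction n with
    | zero => simpa using hM
    | succ n ih =>
      intro t ⟨ht0, ht1⟩
      obtain ⟨u, hu, hsq⟩ : ∃ u ∈ Icc (0 : ℝ) 1, g t ^ 2 ≤ g u := by
        rcases le_total t (1 / 2) with ht' | ht'
        · refine ⟨2 * t, ⟨by linarith, by linarith⟩, ?_⟩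
          have := hmid 0 (by simp) (2 * t) ⟨by linarith, by linarith⟩
          rw [show (0 + 2 * t) / 2 = t by ring] at this
          nlinarith [hg (2 * t) ⟨by linarith, by linarith⟩]
        · refine ⟨2 * t - 1, ⟨by linarith, by linarith⟩, ?_⟩
          have := hmid (2 * t - 1) ⟨by linarith, by linarith⟩ 1 (by simp)
          rw [show (2 * t - 1 + 1) / 2 = t by ring] at this
          nlinarith [hg (2 * t - 1) ⟨by linarith, by linarith⟩]
      calc g t ^ 2 ^ (n + 1) = (g t ^ 2) ^ 2 ^ n := by rw [pow_succ', pow_mul]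
        _ ≤ g u ^ 2 ^ n := pow_le_pow_left₀ (sq_nonneg _) hsq _
        _ ≤ M := ih u hu
  by_contra! hgt
  have hgrow : Tendsto (fun n : ℕ => g t ^ 2 ^ n) atTop atTop :=
    (tendsto_pow_atTop_atTop_of_one_lt hgt).comp
      (tendsto_pow_atTop_atTop_of_one_lt one_lt_two)
  obtain ⟨n, hn⟩ := (hgrow.eventually_gt_atTop M).exists
  exact (hpow n t ht).not_gt hn

theorem le_rpow_mul_rpow_of_sq_midpoint_le_of_pos {f : ℝ → ℝ} {M a b : ℝ}
    (hf : ∀ t ∈ Icc (0 : ℝ) 1, 0 ≤ f t) (hM : ∀ t ∈ Icc (0 : ℝ) 1, f t ≤ M)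
    (hmid : ∀ s ∈ Icc (0 : ℝ) 1, ∀ t ∈ Icc (0 : ℝ) 1, f ((s + t) / 2) ^ 2 ≤ f s * f t)
    (ha : 0 < a) (hb : 0 < b) (h0 : f 0 ≤ a) (h1 : f 1 ≤ b) {θ : ℝ} (hθ : θ ∈ Icc (0 : ℝ) 1) :
    f θ ≤ a ^ (1 - θ) * b ^ θ := by
  -- Dividing by the log-affine `w` with `w 0 = a`, `w 1 = b` preserves midpoint log-convexity.
  set w : ℝ → ℝ := fun t => Real.exp ((1 - t) * Real.log a + t * Real.log b)
  have hw : ∀ t, 0 < w t := fun t => Real.exp_pos _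
  have hw_mid : ∀ s t, w ((s + t) / 2) ^ 2 = w s * w t := fun s t => by
    simp only [w, sq, ← Real.exp_add]; ring_nf
  have hw0 : w 0 = a := by simp [w, Real.exp_log ha]
  have hw1 : w 1 = b := by simp [w, Real.exp_log hb]
  have hw_ge : ∀ t ∈ Icc (0 : ℝ) 1, min a b ≤ w t := by
    rintro t ⟨ht0, ht1⟩
    have hla : Real.log (min a b) ≤ Real.log a := Real.log_le_log (by positivity) (min_le_left _ _)
    have hlb : Real.log (min a b) ≤ Real.log b := Real.log_le_log (by positivity) (min_le_right _ _)
    calc min a b = Real.exp (Real.log (min a b)) := (Real.exp_log (by positivity)).symm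
      _ ≤ w t := Real.exp_le_exp.mpr (by nlinarith)
  have hg := le_one_of_sq_midpoint_le (g := fun t => f t / w t) (M := M / min a b)
    (fun t ht => div_nonneg (hf t ht) (hw t).le)
    (fun t ht => div_le_div₀ ((hf 0 (by simp)).trans (hM 0 (by simp))) (hM t ht) (by positivity)
      (hw_ge t ht))
    (fun s hs t ht => by
      rw [div_pow, hw_mid, div_mul_div_comm]
      exact div_le_div_of_nonneg_right (hmid s hs t ht) (mul_pos (hw s) (hw t)).le)
    (by rwa [hw0, div_le_one ha]) (by rwa [hw1, div_le_one hb]) hθ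
  rw [div_le_one (hw θ)] at hg
  rwa [Real.rpow_def_of_pos ha, Real.rpow_def_of_pos hb, ← Real.exp_add, mul_comm _ (1 - θ),
    mul_comm _ θ]

theorem le_rpow_mul_rpow_of_sq_midpoint_le {f : ℝ → ℝ} {M : ℝ}
    (hf : ∀ t ∈ Icc (0 : ℝ) 1, 0 ≤ f t) (hM : ∀ t ∈ Icc (0 : ℝ) 1, f t ≤ M)
    (hmid : ∀ s ∈ Icc (0 : ℝ) 1, ∀ t ∈ Icc (0 : ℝ) 1, f ((s + t) / 2) ^ 2 ≤ f s * f t)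
    {θ : ℝ} (hθ : θ ∈ Icc (0 : ℝ) 1) : f θ ≤ f 0 ^ (1 - θ) * f 1 ^ θ := by
  have hε : ∀ ε > 0, f θ ≤ (f 0 + ε) ^ (1 - θ) * (f 1 + ε) ^ θ := fun ε hε =>
    le_rpow_mul_rpow_of_sq_midpoint_le_of_pos hf hM hmid
      (by linarith [hf 0 (by simp)]) (by linarith [hf 1 (by simp)]) (by linarith) (by linarith) hθ
  have hcont : Continuous fun ε : ℝ => (f 0 + ε) ^ (1 - θ) * (f 1 + ε) ^ θ :=
    ((Real.continuous_rpow_const (by linarith [hθ.2])).comp (continuous_const_add _)).mul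
      ((Real.continuous_rpow_const hθ.1).comp (continuous_const_add _))
  have hlim := (hcont.tendsto 0).mono_left (nhdsWithin_le_nhds (s := Ioi 0))
  simp only [add_zero] at hlim
  exact ge_of_tendsto hlim (eventually_nhdsWithin_of_forall hε)

theorem rpow_mul_rpow_add_rpow_mul_rpow_le {p q : ℝ} (hpq : p.HolderConjugate q) {a b c d : ℝ}
    (ha : 0 ≤ a) (hb : 0 ≤ b) (hc : 0 ≤ c) (hd : 0 ≤ d) (hcd : c + d ≤ 1) :
    c ^ (1 / q) * a ^ (1 / p) + d ^ (1 / q) * b ^ (1 / p) ≤ (a + b) ^ (1 / p) := by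
  have hholder := Real.inner_le_Lp_mul_Lq_of_nonneg Finset.univ hpq
    (f := ![a ^ (1 / p), b ^ (1 / p)]) (g := ![c ^ (1 / q), d ^ (1 / q)])
    (by intro i _; fin_cases i <;> simp <;> positivity)
    (by intro i _; fin_cases i <;> simp <;> positivity)
  simp only [Fin.sum_univ_two, Matrix.cons_val_zero, Matrix.cons_val_one,
    one_div, Real.rpow_inv_rpow ha hpq.ne_zero, Real.rpow_inv_rpow hb hpq.ne_zero,
    Real.rpow_inv_rpow hc hpq.symm.ne_zero, Real.rpow_inv_rpow hd hpq.symm.ne_zero] at hholder ⊢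
  calc c ^ q⁻¹ * a ^ p⁻¹ + d ^ q⁻¹ * b ^ p⁻¹ ≤ (a + b) ^ p⁻¹ * (c + d) ^ q⁻¹ := by linarith
    _ ≤ (a + b) ^ p⁻¹ :=
      mul_le_of_le_one_right (by positivity)
        (Real.rpow_le_one (by positivity) hcd hpq.symm.inv_nonneg)

lemma PositiveLinearMap.re_apply_nonneg {E : Type*} [AddCommGroup E] [PartialOrder E]
    [IsOrderedAddMonoid E] [Module ℂ E] (φ : E →ₚ[ℂ] ℂ) {x : E} (hx : 0 ≤ x) : 0 ≤ (φ x).re :=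
  (Complex.nonneg_iff.mp (φ.map_nonneg hx)).1

section

variable {A : Type*} [CStarAlgebra A] [PartialOrder A] [StarOrderedRing A]

namespace CFC

lemma rpow_add_of_nonneg {a : A} (ha : 0 ≤ a) {r s : ℝ} (hr : 0 ≤ r) (hs : 0 ≤ s) :
    a ^ (r + s) = a ^ r * a ^ s := by
  rw [rpow_eq_cfc_real ha, rpow_eq_cfc_real ha, rpow_eq_cfc_real ha,
    ← cfc_mul _ _ a (Real.continuous_rpow_const hr).continuousOn
      (Real.continuous_rpow_const hs).continuousOn]
  exact cfc_congr fun t ht => Real.rpow_add_of_nonneg (spectrum_nonneg_of_nonneg ha ht) hr hs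

lemma rpow_le_algebraMap {a : A} (ha : 0 ≤ a) {r m : ℝ} (hr : 0 ≤ r) (hrm : r ≤ m) :
    a ^ r ≤ algebraMap ℝ A ((1 + ‖a‖) ^ m) := by
  nontriviality A
  rw [rpow_eq_cfc_real ha]
  refine cfc_le_algebraMap _ _ a (fun t ht => ?_) (Real.continuous_rpow_const hr).continuousOn
  have ht0 : 0 ≤ t := spectrum_nonneg_of_nonneg ha ht
  have ht1 : t ≤ 1 + ‖a‖ := by
    linarith [Real.le_norm_self t, spectrum.norm_le_norm_of_mem (𝕜 := ℝ) ht]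
  calc t ^ r ≤ (1 + ‖a‖) ^ r := by gcongr
    _ ≤ (1 + ‖a‖) ^ m := Real.rpow_le_rpow_of_exponent_le (by linarith [norm_nonneg a]) hrm

end CFC

namespace PositiveLinearMap

variable (φ : A →ₚ[ℂ] ℂ)

lemma re_apply_star_mul_sq_le (u v : A) :
    (φ (star u * v)).re ^ 2 ≤ (φ (star u * u)).re * (φ (star v * v)).re := by
  have hcs := norm_inner_le_norm (𝕜 := ℂ) (φ.toPreGNS u) (φ.toPreGNS v)
  rw [preGNS_inner_def, preGNS_norm_def, preGNS_norm_def] at hcs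
  have hu := φ.re_apply_nonneg (star_mul_self_nonneg u)
  have hv := φ.re_apply_nonneg (star_mul_self_nonneg v)
  calc (φ (star u * v)).re ^ 2 ≤ ‖φ (star u * v)‖ ^ 2 := by
        rw [sq_le_sq]; simpa using Complex.abs_re_le_norm _
    _ ≤ (√(φ (star u * u)).re * √(φ (star v * v)).re) ^ 2 := by gcongr; exact hcs
    _ = _ := by rw [mul_pow, Real.sq_sqrt hu, Real.sq_sqrt hv]

variable {x y : A}

lemma apply_star_rpow_mul_rpow_mul_rpow_mul_rpow (hφ : ∀ a b : A, φ (a * b) = φ (b * a))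
    (hx : 0 ≤ x) (hy : 0 ≤ y) {r₁ s₁ r₂ s₂ : ℝ} (hr₁ : 0 ≤ r₁) (hs₁ : 0 ≤ s₁)
    (hr₂ : 0 ≤ r₂) (hs₂ : 0 ≤ s₂) :
    φ (star (x ^ r₁ * y ^ s₁) * (x ^ r₂ * y ^ s₂)) = φ (x ^ (r₁ + r₂) * y ^ (s₁ + s₂)) := by
  rw [star_mul, (IsSelfAdjoint.of_nonneg CFC.rpow_nonneg).star_eq,
    (IsSelfAdjoint.of_nonneg CFC.rpow_nonneg).star_eq, mul_assoc, hφ, add_comm s₁ s₂,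
    CFC.rpow_add_of_nonneg hx hr₁ hr₂, CFC.rpow_add_of_nonneg hy hs₂ hs₁]
  simp only [mul_assoc]

lemma re_apply_rpow_mul_rpow_nonneg (hφ : ∀ a b : A, φ (a * b) = φ (b * a))
    (hx : 0 ≤ x) (hy : 0 ≤ y) {r s : ℝ} (hr : 0 ≤ r) (hs : 0 ≤ s) :
    0 ≤ (φ (x ^ r * y ^ s)).re := by
  have h := apply_star_rpow_mul_rpow_mul_rpow_mul_rpow φ hφ hx hy (r₁ := r / 2) (s₁ := s / 2)
    (r₂ := r / 2) (s₂ := s / 2) (by positivity) (by positivity) (by positivity) (by positivity)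
  rw [add_halves, add_halves] at h
  exact h ▸ φ.re_apply_nonneg (star_mul_self_nonneg _)

lemma sq_re_apply_rpow_mul_rpow_midpoint_le (hφ : ∀ a b : A, φ (a * b) = φ (b * a))
    (hx : 0 ≤ x) (hy : 0 ≤ y) {r₁ s₁ r₂ s₂ : ℝ} (hr₁ : 0 ≤ r₁) (hs₁ : 0 ≤ s₁)
    (hr₂ : 0 ≤ r₂) (hs₂ : 0 ≤ s₂) :
    (φ (x ^ ((r₁ + r₂) / 2) * y ^ ((s₁ + s₂) / 2))).re ^ 2 ≤
      (φ (x ^ r₁ * y ^ s₁)).re * (φ (x ^ r₂ * y ^ s₂)).re := by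
  have hcs := φ.re_apply_star_mul_sq_le (x ^ (r₁ / 2) * y ^ (s₁ / 2)) (x ^ (r₂ / 2) * y ^ (s₂ / 2))
  simp only [apply_star_rpow_mul_rpow_mul_rpow_mul_rpow φ hφ hx hy, hr₁, hs₁, hr₂, hs₂,
    div_nonneg, zero_le_two, add_halves] at hcs
  rwa [← add_div, ← add_div] at hcs

lemma re_apply_rpow_mul_rpow_le (hφ : ∀ a b : A, φ (a * b) = φ (b * a))
    (hx : 0 ≤ x) (hy : 0 ≤ y) {r s m n : ℝ} (hr : 0 ≤ r) (hrm : r ≤ m) (hs : 0 ≤ s) (hsn : s ≤ n) :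
    (φ (x ^ r * y ^ s)).re ≤ (1 + ‖x‖) ^ m * (1 + ‖y‖) ^ n * (φ 1).re := by
  have hy_half : y ^ (s / 2) * y ^ (s / 2) = y ^ s := by
    rw [← CFC.rpow_add_of_nonneg hy (by positivity) (by positivity), add_halves]
  have hconj : y ^ (s / 2) * x ^ r * y ^ (s / 2) ≤ (1 + ‖x‖) ^ m • y ^ s := by
    calc y ^ (s / 2) * x ^ r * y ^ (s / 2)
        ≤ y ^ (s / 2) * algebraMap ℝ A ((1 + ‖x‖) ^ m) * y ^ (s / 2) :=
          IsSelfAdjoint.of_nonneg CFC.rpow_nonneg |>.conjugate_le_conjugate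
            (CFC.rpow_le_algebraMap hx hr hrm)
      _ = (1 + ‖x‖) ^ m • y ^ s := by
          rw [Algebra.algebraMap_eq_smul_one, mul_smul_one, smul_mul_assoc, hy_half]
  calc (φ (x ^ r * y ^ s)).re = (φ (y ^ (s / 2) * x ^ r * y ^ (s / 2))).re := by
        rw [← hy_half, ← mul_assoc, hφ, mul_assoc]
    _ ≤ (φ ((1 + ‖x‖) ^ m • y ^ s)).re := Complex.re_le_re (φ.mono hconj)
    _ = (1 + ‖x‖) ^ m * (φ (y ^ s)).re := by rw [φ.map_smul_of_tower, Complex.smul_re, smul_eq_mul]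
    _ ≤ (1 + ‖x‖) ^ m * (φ (algebraMap ℝ A ((1 + ‖y‖) ^ n))).re := by
        gcongr _ * ?_
        exact Complex.re_le_re (φ.mono (CFC.rpow_le_algebraMap hy hs hsn))
    _ = (1 + ‖x‖) ^ m * (1 + ‖y‖) ^ n * (φ 1).re := by
        rw [Algebra.algebraMap_eq_smul_one, φ.map_smul_of_tower, Complex.smul_re, smul_eq_mul,
          mul_assoc]

theorem re_apply_mul_le_of_holderConjugate (hφ : ∀ a b : A, φ (a * b) = φ (b * a))
    {p q : ℝ} (hpq : p.HolderConjugate q) (hx : 0 ≤ x) (hy : 0 ≤ y) :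
    (φ (x * y)).re ≤ (φ (x ^ q)).re ^ (1 / q) * (φ (y ^ p)).re ^ (1 / p) := by
  have hp := hpq.pos
  have hq := hpq.symm.pos
  have hexp : ∀ θ ∈ Icc (0 : ℝ) 1, 0 ≤ (1 - θ) * q ∧ (1 - θ) * q ≤ q ∧ 0 ≤ θ * p ∧ θ * p ≤ p :=
    fun θ ⟨h0, h1⟩ => ⟨by nlinarith, by nlinarith, by nlinarith, by nlinarith⟩
  have hF := le_rpow_mul_rpow_of_sq_midpoint_le
    (f := fun θ => (φ (x ^ ((1 - θ) * q) * y ^ (θ * p))).re)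
    (fun θ hθ => re_apply_rpow_mul_rpow_nonneg φ hφ hx hy (hexp θ hθ).1 (hexp θ hθ).2.2.1)
    (fun θ hθ => re_apply_rpow_mul_rpow_le φ hφ hx hy (hexp θ hθ).1 (hexp θ hθ).2.1
      (hexp θ hθ).2.2.1 (hexp θ hθ).2.2.2)
    (fun s hs t ht => by
      convert sq_re_apply_rpow_mul_rpow_midpoint_le φ hφ hx hy (hexp s hs).1 (hexp s hs).2.2.1
        (hexp t ht).1 (hexp t ht).2.2.1 using 6 <;> ring)
    (θ := 1 / p) ⟨hpq.one_div_nonneg, by rw [div_le_one hp]; exact hpq.lt.le⟩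
  have h1q : 1 - 1 / p = 1 / q := by rw [one_div, one_div, hpq.one_sub_inv]
  simpa only [h1q, one_div_mul_cancel hp.ne', one_div_mul_cancel hq.ne', sub_zero, sub_self,
    one_mul, zero_mul, mul_one, CFC.rpow_one x hx, CFC.rpow_one y hy, CFC.rpow_zero x hx,
    CFC.rpow_zero y hy] using hF

end PositiveLinearMap

end

theorem hoelder_finite_factor {A : Type*} [CStarAlgebra A] [PartialOrder A] [StarOrderedRing A]
    (tr : A →ₗ[ℂ] ℂ) (htr_pos : ∀ x : A, 0 ≤ x → 0 ≤ tr x) (htr_unital : tr 1 = 1)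
    (htr_tracial : ∀ x y : A, tr (x * y) = tr (y * x))
    (p q : ℝ) (hp : 1 < p) (hpq : 1 / p + 1 / q = 1)
    (c d : A) (hc : 0 ≤ c) (hd : 0 ≤ d)
    (hcd : cfc (fun x : ℝ => x ^ q) c + cfc (fun x : ℝ => x ^ q) d ≤ 1)
    (a b : A) (ha : 0 ≤ a) (hb : 0 ≤ b) :
    (tr (c * a + d * b)).re ≤
      ((tr (cfc (fun x : ℝ => x ^ p) a + cfc (fun x : ℝ => x ^ p) b)).re) ^ (1 / p) := by
  have hpq' : p.HolderConjugate q :=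
    Real.holderConjugate_iff.mpr ⟨hp, by simpa only [one_div] using hpq⟩
  let φ := PositiveLinearMap.mk₀ tr htr_pos
  rw [← CFC.rpow_eq_cfc_real hc, ← CFC.rpow_eq_cfc_real hd] at hcd
  rw [← CFC.rpow_eq_cfc_real ha, ← CFC.rpow_eq_cfc_real hb]
  have hcd' : (tr (c ^ q)).re + (tr (d ^ q)).re ≤ 1 := by
    have h : (tr (c ^ q + d ^ q)).re ≤ (tr 1).re := Complex.re_le_re (φ.mono hcd)
    rwa [map_add, Complex.add_re, htr_unital, Complex.one_re] at h
  calc (tr (c * a + d * b)).re = (tr (c * a)).re + (tr (d * b)).re := by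
        rw [map_add, Complex.add_re]
    _ ≤ (tr (c ^ q)).re ^ (1 / q) * (tr (a ^ p)).re ^ (1 / p)
          + (tr (d ^ q)).re ^ (1 / q) * (tr (b ^ p)).re ^ (1 / p) :=
        add_le_add (φ.re_apply_mul_le_of_holderConjugate htr_tracial hpq' hc ha)
          (φ.re_apply_mul_le_of_holderConjugate htr_tracial hpq' hd hb)
    _ ≤ ((tr (a ^ p)).re + (tr (b ^ p)).re) ^ (1 / p) :=
        rpow_mul_rpow_add_rpow_mul_rpow_le hpq' (φ.re_apply_nonneg CFC.rpow_nonneg)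
          (φ.re_apply_nonneg CFC.rpow_nonneg) (φ.re_apply_nonneg CFC.rpow_nonneg)
          (φ.re_apply_nonneg CFC.rpow_nonneg) hcd'
    _ = (tr (a ^ p + b ^ p)).re ^ (1 / p) := by rw [map_add, Complex.add_re]
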